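/- Let E be a Dedekind complete vector lattice, x ∈ E, P_x the band projection onto the band generated by x, and 𝕀_{P_x} the principal ideal of L_ob(E) generated by P_x. Then 𝕀_{P_x} = P_x·Z(E), where Z(E) is the ideal centre of E. -/

import Mathlib

variable (E : Type*) [AddCommGroup E] [ConditionallyCompleteLattice E] [Module ℝ E]
  [CovariantClass E E (· + ·) (· ≤ ·)] [PosSMulMono ℝ E]

/-- The order on order bounded operators: `A ≤ B` iff `A x ≤ B x` for all `x ≥ 0`. -/
def opLE (A B : E →ₗ[ℝ] E) : Prop := ∀ x : E, 0 ≤ x → A x ≤ B x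

/-- An operator is order bounded when it maps order bounded sets to order bounded sets. -/
def IsOrderBoundedOp (T : E →ₗ[ℝ] E) : Prop :=
  ∀ a b : E, ∃ c d : E, ∀ x : E, a ≤ x → x ≤ b → c ≤ T x ∧ T x ≤ d

/-- Band preserving: `T x` lies in the band generated by `x`; equivalently `T x ⊥ y`
whenever `x ⊥ y`. -/
def IsBandPreserving (T : E →ₗ[ℝ] E) : Prop :=
  ∀ x y : E, |x| ⊓ |y| = 0 → |T x| ⊓ |y| = 0

/-- An orthomorphism is an order bounded band preserving linear operator. -/
def IsOrthomorphism (T : E →ₗ[ℝ] E) : Prop :=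
  IsOrderBoundedOp E T ∧ IsBandPreserving E T

/-- Membership in the band generated by a set `S` (in an Archimedean vector lattice this is
the double disjoint complement of `S`). -/
def memBandGen (S : Set E) (w : E) : Prop :=
  ∀ u : E, (∀ s ∈ S, |u| ⊓ |s| = 0) → |u| ⊓ |w| = 0

/-- `P` is the band projection onto the band `B`: it maps into `B` and `x - P x` is
disjoint from `B` for every `x`. -/
def IsBandProjectionOnto (B : Set E) (P : E →ₗ[ℝ] E) : Prop :=
  (∀ x : E, P x ∈ B) ∧ (∀ x : E, ∀ b ∈ B, |x - P x| ⊓ |b| = 0)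

/-- Order convergence of a net: there is a downward directed set `D` with infimum `0`
such that the net is eventually dominated by every member of `D`. -/
def OrderConvNet {ι : Type*} [Preorder ι] (y : ι → E) (l : E) : Prop :=
  ∃ D : Set E, D.Nonempty ∧ DirectedOn (· ≥ ·) D ∧ IsGLB D 0 ∧
    ∀ d ∈ D, ∃ i₀ : ι, ∀ i : ι, i₀ ≤ i → |y i - l| ≤ d

/-- Unbounded order convergence of a net. -/
def UOConvNet {ι : Type*} [Preorder ι] (y : ι → E) (l : E) : Prop :=
  ∀ u : E, 0 ≤ u → OrderConvNet E (fun i => |y i - l| ⊓ u) 0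

/-- Order convergence of a net of operators, in the operator order of the order bounded
operators: there is a downward directed set `D` of operators whose infimum among the
order bounded operators is `0`, eventually dominating `|T i - L|`. -/
def OpOrderConvNet {ι : Type*} [Preorder ι] (T : ι → E →ₗ[ℝ] E) (L : E →ₗ[ℝ] E) : Prop :=
  ∃ D : Set (E →ₗ[ℝ] E), D.Nonempty ∧
    DirectedOn (fun A B => opLE E B A) D ∧
    (∀ d ∈ D, opLE E 0 d) ∧
    (∀ C : E →ₗ[ℝ] E, IsOrderBoundedOp E C → (∀ d ∈ D, opLE E C d) → opLE E C 0) ∧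
    ∀ d ∈ D, ∃ i₀ : ι, ∀ i : ι, i₀ ≤ i → opLE E (L - T i) d ∧ opLE E (T i - L) d


/-!
If `|T z| ≤ c • P |z|` for all `z`, then every `T z` is dominated by a multiple of an element of
the band `B_x`, hence lies in `B_x`, where `P` acts as the identity: so `T = P ∘ T`, and `T` is in
the centre because `0 ≤ P ≤ I`. Conversely, positivity of `P` gives
`|P (T z)| ≤ P |T z| ≤ c • P |z|` for `T` in the centre.
-/

section Disjoint

variable {α : Type*} [Lattice α] [AddCommGroup α] [AddLeftMono α]

lemma inf_add_eq_zero {a b c : α} (ha : 0 ≤ a) (hb : 0 ≤ b) (hc : 0 ≤ c)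
    (hab : a ⊓ b = 0) (hac : a ⊓ c = 0) : a ⊓ (b + c) = 0 := by
  have hle_c : a ⊓ (b + c) ≤ c :=
    calc a ⊓ (b + c) ≤ (a + c) ⊓ (b + c) := inf_le_inf_right _ (le_add_of_nonneg_right hc)
      _ = c := by rw [← inf_add, hab, zero_add]
  exact le_antisymm (hac ▸ le_inf inf_le_left hle_c) (le_inf ha (add_nonneg hb hc))

lemma inf_abs_eq_zero_of_abs_le {a b w : α} (ha : 0 ≤ a) (h : a ⊓ b = 0) (hw : |w| ≤ b) :
    a ⊓ |w| = 0 :=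
  le_antisymm (h ▸ inf_le_inf_left a hw) (le_inf ha (abs_nonneg w))

lemma eq_zero_of_abs_eq_zero {a : α} (h : |a| = 0) : a = 0 :=
  le_antisymm (h ▸ le_abs_self a) (neg_nonpos.mp (h ▸ neg_le_abs a))

lemma nonneg_of_abs_inf_abs_eq_zero {a b : α} (h : |a| ⊓ |b| = 0) (hab : 0 ≤ a + b) :
    0 ≤ a := by
  have hneg_le_b : -a ≤ b := by rwa [← sub_nonneg, sub_neg_eq_add, add_comm]
  have : -a ⊔ 0 ≤ |a| ⊓ |b| :=
    le_inf (sup_le (neg_le_abs a) (abs_nonneg a))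
      (sup_le (hneg_le_b.trans (le_abs_self b)) (abs_nonneg b))
  exact neg_nonpos.mp (le_sup_left.trans (h ▸ this))

variable {𝕜 : Type*} [Field 𝕜] [LinearOrder 𝕜] [IsStrictOrderedRing 𝕜] [Module 𝕜 α]
  [PosSMulMono 𝕜 α]

lemma inf_smul_eq_zero {a b : α} (ha : 0 ≤ a) (hb : 0 ≤ b) (h : a ⊓ b = 0) {c : 𝕜}
    (hc : 0 ≤ c) : a ⊓ c • b = 0 := by
  have hk : (0 : 𝕜) < c + 1 := by linarith
  refine le_antisymm ?_ (le_inf ha (smul_nonneg hc hb))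
  calc a ⊓ c • b ≤ (c + 1) • a ⊓ (c + 1) • b := by
        rw [add_smul, add_smul, one_smul, one_smul]
        exact inf_le_inf (le_add_of_nonneg_left (smul_nonneg hc ha)) (le_add_of_nonneg_right hb)
    _ = (c + 1) • (a ⊓ b) := ((OrderIso.smulRight hk).map_inf a b).symm
    _ = 0 := by rw [h, smul_zero]

end Disjoint

section Band

variable {V : Type*} [AddCommGroup V] [ConditionallyCompleteLattice V] [AddLeftMono V]

lemma memBandGen_sub {S : Set V} {w₁ w₂ : V} (h₁ : memBandGen V S w₁)
    (h₂ : memBandGen V S w₂) : memBandGen V S (w₁ - w₂) := fun u hu =>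
  inf_abs_eq_zero_of_abs_le (abs_nonneg u)
    (inf_add_eq_zero (abs_nonneg u) (abs_nonneg w₁) (abs_nonneg w₂) (h₁ u hu) (h₂ u hu))
    (by simpa [sub_eq_add_neg] using abs_add_le w₁ (-w₂))

lemma memBandGen_of_abs_le_smul [Module ℝ V] [PosSMulMono ℝ V] {S : Set V} {v w : V} {c : ℝ}
    (hv : memBandGen V S v) (hc : 0 ≤ c) (hw : |w| ≤ c • |v|) : memBandGen V S w :=
  fun u hu => inf_abs_eq_zero_of_abs_le (abs_nonneg u)
    (inf_smul_eq_zero (abs_nonneg u) (abs_nonneg v) (hv u hu) hc) hw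

namespace IsBandProjectionOnto

variable [Module ℝ V] {B : Set V} {P : V →ₗ[ℝ] V}

lemma nonneg (hP : IsBandProjectionOnto V B P) {y : V} (hy : 0 ≤ y) : 0 ≤ P y := by
  have h : |P y| ⊓ |y - P y| = 0 := inf_comm (|P y|) _ ▸ hP.2 y (P y) (hP.1 y)
  exact nonneg_of_abs_inf_abs_eq_zero h (by simpa using hy)

lemma le_self (hP : IsBandProjectionOnto V B P) {y : V} (hy : 0 ≤ y) : P y ≤ y :=
  sub_nonneg.mp (nonneg_of_abs_inf_abs_eq_zero (hP.2 y (P y) (hP.1 y)) (by simpa using hy))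

lemma monotone (hP : IsBandProjectionOnto V B P) : Monotone P := fun y z h => by
  simpa using hP.nonneg (sub_nonneg.mpr h)

lemma abs_apply_le (hP : IsBandProjectionOnto V B P) (w : V) : |P w| ≤ P |w| :=
  abs_le'.mpr ⟨hP.monotone (le_abs_self w), map_neg P w ▸ hP.monotone (neg_le_abs w)⟩

lemma apply_eq_self {S : Set V} (hP : IsBandProjectionOnto V {w | memBandGen V S w} P) {w : V}
    (hw : memBandGen V S w) : P w = w := by
  have h := hP.2 w (w - P w) (memBandGen_sub hw (hP.1 w))
  rw [inf_idem] at h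
  exact (sub_eq_zero.mp (eq_zero_of_abs_eq_zero h)).symm

end IsBandProjectionOnto

end Band

/-- for `x` in a Dedekind complete vector lattice `E`, with `P` the band
projection onto the principal band `B_x`, the principal ideal of the order bounded
operators generated by `P` equals `P ∘ Z(E)`, where `Z(E)` is the ideal centre. -/
theorem stmt11
    (x : E) (P : E →ₗ[ℝ] E)
    (hP : IsBandProjectionOnto E {w | memBandGen E {x} w} P) :
    {T : E →ₗ[ℝ] E | ∃ c : ℝ, 0 ≤ c ∧ ∀ z : E, |T z| ≤ c • P |z|} =
      {Q : E →ₗ[ℝ] E | ∃ T : E →ₗ[ℝ] E,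
        (∃ c : ℝ, 0 ≤ c ∧ ∀ z : E, |T z| ≤ c • |z|) ∧ Q = P.comp T} := by
  ext Q
  constructor
  · rintro ⟨c, hc, hQ⟩
    have hQ_band (z : E) : memBandGen E {x} (Q z) := by
      refine memBandGen_of_abs_le_smul (hP.1 |z|) hc ?_
      rw [abs_of_nonneg (hP.nonneg (abs_nonneg z))]
      exact hQ z
    refine ⟨Q, ⟨c, hc, fun z => ?_⟩,
      LinearMap.ext fun z => (hP.apply_eq_self (hQ_band z)).symm⟩
    exact (hQ z).trans (smul_le_smul_of_nonneg_left (hP.le_self (abs_nonneg z)) hc)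
  · rintro ⟨T, ⟨c, hc, hT⟩, rfl⟩
    refine ⟨c, hc, fun z => ?_⟩
    calc |P (T z)| ≤ P |T z| := hP.abs_apply_le (T z)
      _ ≤ P (c • |z|) := hP.monotone (hT z)
      _ = c • P |z| := map_smul P c |z|
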